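/- Let G be a nonempty finite additive group and S a nonempty finite type. Let W₁ : Ω → G, W₂₁ : Ω → S, W₂₂ : Ω → G be mutually independent random variables with W₁ uniformly distributed on G, and set C := W₂₂ + W₁. Let Z₁, Z₂₁, Z₂₂ be finitely-valued random variables on Ω such that: (i) Z₁ is conditionally independent of the tuple (W₂₁, W₂₂, Z₂₁, Z₂₂) given W₁; (ii) Z₂₁ is conditionally independent of the tuple (W₁, W₂₂, Z₁, Z₂₂) given W₂₁; and (iii) Z₂₂ is conditionally independent of the tuple (W₁, W₂₁, W₂₂, Z₁, Z₂₁) given C. If ε ≥ 0, I(W₁ ; Z₁) ≤ ε, and I(W₂₁ ; Z₂₁) ≤ ε, then I((W₂₁, W₂₂) ; (Z₁, Z₂₁, Z₂₂)) ≤ 2ε. -/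

import Mathlib

open MeasureTheory ProbabilityTheory

/-- Shannon entropy of a finitely-valued random variable `X` under `μ`. -/
noncomputable def finEntropy {Ω : Type*} [MeasurableSpace Ω] (μ : Measure Ω)
    {S : Type*} [Fintype S] (X : Ω → S) : ℝ :=
  ∑ s : S, Real.negMulLog ((μ (X ⁻¹' {s})).toReal)

/-- Mutual information `I(X ; Y)` of finitely-valued random variables under `μ`. -/
noncomputable def finMutualInfo {Ω : Type*} [MeasurableSpace Ω] (μ : Measure Ω)
    {S T : Type*} [Fintype S] [Fintype T] (X : Ω → S) (Y : Ω → T) : ℝ :=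
  finEntropy μ X + finEntropy μ Y - finEntropy μ (fun ω => (X ω, Y ω))

/-- Conditional mutual information `I(X ; Y | Z)` of finitely-valued random
variables under `μ`. -/
noncomputable def finCondMutualInfo {Ω : Type*} [MeasurableSpace Ω] (μ : Measure Ω)
    {S T U : Type*} [Fintype S] [Fintype T] [Fintype U]
    (X : Ω → S) (Y : Ω → T) (Z : Ω → U) : ℝ :=
  finEntropy μ (fun ω => (X ω, Z ω)) + finEntropy μ (fun ω => (Y ω, Z ω))
    - finEntropy μ (fun ω => (X ω, Y ω, Z ω)) - finEntropy μ Z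

/-- `X` and `Y` are conditionally independent given `Z` (for finitely-valued
random variables this pointwise product formula is the usual definition). -/
def CondIndepFinRV {Ω : Type*} [MeasurableSpace Ω] (μ : Measure Ω)
    {S T U : Type*} (X : Ω → S) (Y : Ω → T) (Z : Ω → U) : Prop :=
  ∀ (s : S) (t : T) (u : U),
    μ (X ⁻¹' {s} ∩ Y ⁻¹' {t} ∩ Z ⁻¹' {u}) * μ (Z ⁻¹' {u}) =
      μ (X ⁻¹' {s} ∩ Z ⁻¹' {u}) * μ (Y ⁻¹' {t} ∩ Z ⁻¹' {u})

/-- `U` is uniformly distributed on the finite type `G` under `μ`. -/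
def IsUniformRV {Ω : Type*} [MeasurableSpace Ω] (μ : Measure Ω)
    {G : Type*} [Fintype G] (U : Ω → G) : Prop :=
  ∀ g : G, μ (U ⁻¹' {g}) = (Fintype.card G : ENNReal)⁻¹

/-!
Write `M = (W₂₁, W₂₂)` and `C = W₂₂ + W₁`. A uniform key `W₁` independent of `M` makes the
cipher `C` independent of `M` (one-time pad). Given `(Z₁, Z₂₁, C)`, the output `Z₂₂` carries no
further information about `M`, because `Z₂₂` sees everything only through `C`. The chain rule then
gives `I(M; Z) ≤ I(M; C) + I(M; Z₂₁ | C) + I(M; Z₁ | Z₂₁, C)`. The first term vanishes, the second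
is at most `I(W₂₁; Z₂₁)` since `Z₂₁` sees `(M, C)` only through `W₂₁`, and the third is at most
`I(W₁; Z₁)` since `Z₁` sees everything only through `W₁`.
-/

open Real

section

variable {Ω : Type*} [MeasurableSpace Ω] {μ : Measure Ω} {A B : Type*}

lemma measureReal_preimage_le_comp [IsFiniteMeasure μ] (X : Ω → A) (g : A → B) (a : A) :
    μ.real (X ⁻¹' {a}) ≤ μ.real ((fun ω => g (X ω)) ⁻¹' {g a}) :=
  measureReal_mono fun ω (h : X ω = a) => congrArg g h

lemma finEntropy_comp_of_injective [Fintype A] [Fintype B] (X : Ω → A) {f : A → B}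
    (hf : Function.Injective f) :
    finEntropy μ (fun ω => f (X ω)) = finEntropy μ X := by
  refine (Fintype.sum_of_injective f hf _ _ (fun b hb => ?_) fun a => ?_).symm
  · have : (fun ω => f (X ω)) ⁻¹' {b} = ∅ :=
      Set.eq_empty_of_forall_notMem fun ω h => hb ⟨X ω, h⟩
    simp [this]
  · rw [show (fun ω => f (X ω)) ⁻¹' {f a} = X ⁻¹' {a} by ext; simp [hf.eq_iff]]

lemma CondIndepFinRV.measureReal_mul_eq {C : Type*} {X : Ω → A} {Y : Ω → B} {Z : Ω → C}
    (h : CondIndepFinRV μ X Y Z) (v : A × B × C) :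
    μ.real ((fun ω => (X ω, Y ω, Z ω)) ⁻¹' {v}) * μ.real (Z ⁻¹' {v.2.2}) =
      μ.real ((fun ω => (X ω, Z ω)) ⁻¹' {(v.1, v.2.2)}) *
        μ.real ((fun ω => (Y ω, Z ω)) ⁻¹' {v.2}) := by
  obtain ⟨a, b, c⟩ := v
  have h' := congrArg ENNReal.toReal (h a b c)
  simp only [ENNReal.toReal_mul, ← measureReal_def] at h'
  simpa only [← Set.singleton_prod_singleton, Set.mk_preimage_prod, Set.inter_assoc] using h'

end

lemma measurable_comp₂_of_finite {Ω A B C : Type*} [MeasurableSpace Ω] [Finite A] [Finite B]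
    [MeasurableSpace A] [MeasurableSingletonClass A] [MeasurableSpace B]
    [MeasurableSingletonClass B] [MeasurableSpace C] {X : Ω → A} {Y : Ω → B}
    (hX : Measurable X) (hY : Measurable Y) (f : A → B → C) :
    Measurable fun ω => f (X ω) (Y ω) :=
  (Measurable.of_discrete (f := fun p : A × B => f p.1 p.2)).comp (hX.prodMk hY)

section Marginals

variable {Ω : Type*} [MeasurableSpace Ω] {μ : Measure Ω}
  {A B : Type*} [Fintype A] [MeasurableSpace A] [MeasurableSingletonClass A]
  {X : Ω → A}

lemma measure_eq_sum_inter_preimage (hX : Measurable X) (s : Set Ω) :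
    μ s = ∑ a, μ (s ∩ X ⁻¹' {a}) := by
  have h := sum_measure_preimage_singleton (μ := μ.restrict s) Finset.univ
    (fun a _ => hX (measurableSet_singleton a))
  simp only [Finset.coe_univ, Set.preimage_univ, Measure.restrict_apply_univ] at h
  rw [← h]
  refine Finset.sum_congr rfl fun a _ => ?_
  rw [Measure.restrict_apply (hX (measurableSet_singleton a)), Set.inter_comm]

lemma sum_measure_preimage_eq_one [IsProbabilityMeasure μ] (hX : Measurable X) :
    ∑ a, μ (X ⁻¹' {a}) = 1 := by
  simpa using (measure_eq_sum_inter_preimage (μ := μ) hX Set.univ).symm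

lemma sum_measureReal_preimage_eq_one [IsProbabilityMeasure μ] (hX : Measurable X) :
    ∑ a, μ.real (X ⁻¹' {a}) = 1 := by
  rw [sum_measureReal_preimage_singleton _ fun a _ => hX (measurableSet_singleton a)]
  simp

lemma sum_measureReal_preimage_mul_comp [IsFiniteMeasure μ] [Fintype B] (hX : Measurable X)
    (g : A → B) (F : B → ℝ) :
    ∑ a, μ.real (X ⁻¹' {a}) * F (g a) =
      ∑ b, μ.real ((fun ω => g (X ω)) ⁻¹' {b}) * F b := by
  classical
  have hfiber : ∀ b, μ.real ((fun ω => g (X ω)) ⁻¹' {b}) =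
      ∑ a with g a = b, μ.real (X ⁻¹' {a}) := fun b => by
    rw [sum_measureReal_preimage_singleton _ fun a _ => hX (measurableSet_singleton a)]
    congr 1
    ext ω
    simp
  simp only [hfiber, Finset.sum_mul]
  rw [← Finset.sum_fiberwise Finset.univ g]
  exact Finset.sum_congr rfl fun b _ => Finset.sum_congr rfl fun a ha => by
    rw [(Finset.mem_filter.1 ha).2]

lemma finEntropy_comp_eq_neg_sum [IsFiniteMeasure μ] [Fintype B] (hX : Measurable X) (g : A → B) :
    finEntropy μ (fun ω => g (X ω)) =
      -∑ a, μ.real (X ⁻¹' {a}) * log (μ.real ((fun ω => g (X ω)) ⁻¹' {g a})) := by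
  rw [sum_measureReal_preimage_mul_comp hX g fun b => log (μ.real ((fun ω => g (X ω)) ⁻¹' {b})),
    finEntropy]
  simp [negMulLog, Measure.real]

lemma measureReal_preimage_eq_sum_prod [IsFiniteMeasure μ] (hX : Measurable X) {Z : Ω → B} (z : B) :
    μ.real (Z ⁻¹' {z}) = ∑ x, μ.real ((fun ω => (X ω, Z ω)) ⁻¹' {(x, z)}) := by
  rw [measureReal_def, measure_eq_sum_inter_preimage hX,
    ENNReal.toReal_sum fun _ _ => measure_ne_top μ _]
  refine Finset.sum_congr rfl fun x _ => ?_
  rw [measureReal_def]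
  congr 2
  ext ω
  simp [and_comm]

end Marginals

lemma sub_mul_div_le_mul_log {P Q R S : ℝ} (hP : 0 ≤ P) (hPQ : P ≤ Q) (hPR : P ≤ R)
    (hQS : Q ≤ S) : P - Q * R / S ≤ P * (log P + log S - log Q - log R) := by
  rcases hP.eq_or_lt with rfl | hP
  · simpa using div_nonneg (mul_nonneg hPQ hPR) (hPQ.trans hQS)
  have hQ := hP.trans_le hPQ
  have hR := hP.trans_le hPR
  have hS := hQ.trans_le hQS
  have hlog := log_le_sub_one_of_pos (show 0 < Q * R / (P * S) by positivity)
  rw [log_div (by positivity) (by positivity), log_mul hQ.ne' hR.ne',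
    log_mul hP.ne' hS.ne'] at hlog
  have hcancel : P * (Q * R / (P * S)) = Q * R / S := by field_simp
  nlinarith

section Information

variable {Ω : Type*} [MeasurableSpace Ω] {μ : Measure Ω} {A B C : Type*}
  [Fintype A] [Fintype B] [Fintype C]

lemma finMutualInfo_prod_eq_add_finCondMutualInfo (X : Ω → A) (Y : Ω → B) (Z : Ω → C) :
    finMutualInfo μ X (fun ω => (Y ω, Z ω)) =
      finMutualInfo μ X Z + finCondMutualInfo μ X Y Z := by
  simp only [finMutualInfo, finCondMutualInfo]
  ring

lemma finMutualInfo_comm (X : Ω → A) (Y : Ω → B) :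
    finMutualInfo μ X Y = finMutualInfo μ Y X := by
  have h : finEntropy μ (fun ω => (Y ω, X ω)) = finEntropy μ (fun ω => (X ω, Y ω)) :=
    finEntropy_comp_of_injective (fun ω => (X ω, Y ω)) Prod.swap_injective
  simp only [finMutualInfo, h]
  ring

lemma finCondMutualInfo_comm (X : Ω → A) (Y : Ω → B) (Z : Ω → C) :
    finCondMutualInfo μ X Y Z = finCondMutualInfo μ Y X Z := by
  have h : finEntropy μ (fun ω => (Y ω, X ω, Z ω)) = finEntropy μ (fun ω => (X ω, Y ω, Z ω)) :=
    finEntropy_comp_of_injective (fun ω => (X ω, Y ω, Z ω))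
      (f := fun v : A × B × C => (v.2.1, v.1, v.2.2)) fun v w h => by simp_all [Prod.ext_iff]
  simp only [finCondMutualInfo, h]
  ring

variable [MeasurableSpace A] [MeasurableSingletonClass A] [MeasurableSpace B]
  [MeasurableSingletonClass B] [MeasurableSpace C] [MeasurableSingletonClass C]
  {X : Ω → A} {Y : Ω → B} {Z : Ω → C}

lemma finCondMutualInfo_eq_sum [IsFiniteMeasure μ] (hX : Measurable X) (hY : Measurable Y)
    (hZ : Measurable Z) :
    finCondMutualInfo μ X Y Z =
      ∑ v : A × B × C, μ.real ((fun ω => (X ω, Y ω, Z ω)) ⁻¹' {v}) *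
        (log (μ.real ((fun ω => (X ω, Y ω, Z ω)) ⁻¹' {v})) + log (μ.real (Z ⁻¹' {v.2.2}))
          - log (μ.real ((fun ω => (X ω, Z ω)) ⁻¹' {(v.1, v.2.2)}))
          - log (μ.real ((fun ω => (Y ω, Z ω)) ⁻¹' {v.2}))) := by
  have hV : Measurable fun ω => (X ω, Y ω, Z ω) := hX.prodMk (hY.prodMk hZ)
  have hXYZ := finEntropy_comp_eq_neg_sum (μ := μ) hV id
  have hXZ := finEntropy_comp_eq_neg_sum (μ := μ) hV fun v => (v.1, v.2.2)
  have hYZ := finEntropy_comp_eq_neg_sum (μ := μ) hV fun v => v.2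
  have hZ := finEntropy_comp_eq_neg_sum (μ := μ) hV fun v => v.2.2
  dsimp only [id] at hXYZ hXZ hYZ hZ
  rw [finCondMutualInfo, hXYZ, hXZ, hYZ, hZ]
  simp only [mul_add, mul_sub, Finset.sum_add_distrib, Finset.sum_sub_distrib]
  ring

lemma finCondMutualInfo_nonneg [IsProbabilityMeasure μ] (hX : Measurable X) (hY : Measurable Y)
    (hZ : Measurable Z) : 0 ≤ finCondMutualInfo μ X Y Z := by
  set V := fun ω => (X ω, Y ω, Z ω)
  have hV : Measurable V := hX.prodMk (hY.prodMk hZ)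
  rw [finCondMutualInfo_eq_sum hX hY hZ]
  have hpair : ∑ v : A × B × C, μ.real ((fun ω => (X ω, Z ω)) ⁻¹' {(v.1, v.2.2)}) *
      μ.real ((fun ω => (Y ω, Z ω)) ⁻¹' {v.2}) / μ.real (Z ⁻¹' {v.2.2}) ≤ 1 := by
    rw [Fintype.sum_prod_type, Finset.sum_comm]
    simp only [← Finset.sum_div, ← Finset.sum_mul, ← measureReal_preimage_eq_sum_prod hX]
    rw [← sum_measureReal_preimage_eq_one (μ := μ) (hY.prodMk hZ)]
    refine Finset.sum_le_sum fun w _ => ?_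
    rcases eq_or_ne (μ.real (Z ⁻¹' {w.2})) 0 with h0 | h0
    · simp [h0]
    · rw [mul_div_cancel_left₀ _ h0]
  calc (0 : ℝ)
      ≤ ∑ v : A × B × C, (μ.real (V ⁻¹' {v}) -
          μ.real ((fun ω => (X ω, Z ω)) ⁻¹' {(v.1, v.2.2)}) *
            μ.real ((fun ω => (Y ω, Z ω)) ⁻¹' {v.2}) / μ.real (Z ⁻¹' {v.2.2})) := by
        rw [Finset.sum_sub_distrib, sum_measureReal_preimage_eq_one hV]
        linarith
    _ ≤ _ := Finset.sum_le_sum fun v _ => sub_mul_div_le_mul_log measureReal_nonneg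
        (measureReal_preimage_le_comp V (fun v => (v.1, v.2.2)) v)
        (measureReal_preimage_le_comp V Prod.snd v)
        (measureReal_preimage_le_comp (fun ω => (X ω, Z ω)) Prod.snd (v.1, v.2.2))

lemma finCondMutualInfo_eq_zero_of_condIndep [IsFiniteMeasure μ] (hX : Measurable X)
    (hY : Measurable Y) (hZ : Measurable Z) (h : CondIndepFinRV μ X Y Z) :
    finCondMutualInfo μ X Y Z = 0 := by
  set V := fun ω => (X ω, Y ω, Z ω)
  rw [finCondMutualInfo_eq_sum hX hY hZ]
  refine Finset.sum_eq_zero fun v _ => ?_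
  rcases measureReal_nonneg.eq_or_lt with h0 | hpos
  · rw [← h0, zero_mul]
  have hXZ := hpos.trans_le (measureReal_preimage_le_comp V (fun v => (v.1, v.2.2)) v)
  have hYZ := hpos.trans_le (measureReal_preimage_le_comp V Prod.snd v)
  have hZ := hXZ.trans_le
    (measureReal_preimage_le_comp (fun ω => (X ω, Z ω)) Prod.snd (v.1, v.2.2))
  have hlog := congrArg log (h.measureReal_mul_eq v)
  rw [log_mul hpos.ne' hZ.ne', log_mul hXZ.ne' hYZ.ne'] at hlog
  rw [hlog]
  ring

end Information

section Unconditional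

variable {Ω : Type*} [MeasurableSpace Ω] {μ : Measure Ω} [IsProbabilityMeasure μ]
  {A B : Type*} [Fintype A] [Fintype B]

lemma finMutualInfo_eq_finCondMutualInfo_const (X : Ω → A) (Y : Ω → B) :
    finMutualInfo μ X Y = finCondMutualInfo μ X Y fun _ => () := by
  have hX : finEntropy μ (fun ω => (X ω, ())) = finEntropy μ X :=
    finEntropy_comp_of_injective X (f := fun a => (a, ())) fun _ _ h => congrArg Prod.fst h
  have hY : finEntropy μ (fun ω => (Y ω, ())) = finEntropy μ Y :=
    finEntropy_comp_of_injective Y (f := fun b => (b, ())) fun _ _ h => congrArg Prod.fst h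
  have hXY : finEntropy μ (fun ω => (X ω, Y ω, ())) = finEntropy μ (fun ω => (X ω, Y ω)) :=
    finEntropy_comp_of_injective (fun ω => (X ω, Y ω)) (f := fun v => (v.1, v.2, ()))
      fun _ _ h => by simp_all [Prod.ext_iff]
  have hconst : finEntropy μ (fun _ : Ω => ()) = 0 := by simp [finEntropy]
  simp only [finMutualInfo, finCondMutualInfo, hX, hY, hXY, hconst]
  ring

variable [MeasurableSpace A] [MeasurableSingletonClass A] [MeasurableSpace B]
  [MeasurableSingletonClass B] {X : Ω → A} {Y : Ω → B}

lemma finMutualInfo_nonneg (hX : Measurable X) (hY : Measurable Y) :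
    0 ≤ finMutualInfo μ X Y := by
  rw [finMutualInfo_eq_finCondMutualInfo_const]
  exact finCondMutualInfo_nonneg hX hY measurable_const

lemma finMutualInfo_eq_zero_of_indep (hX : Measurable X) (hY : Measurable Y)
    (h : ∀ a b, μ (X ⁻¹' {a} ∩ Y ⁻¹' {b}) = μ (X ⁻¹' {a}) * μ (Y ⁻¹' {b})) :
    finMutualInfo μ X Y = 0 := by
  rw [finMutualInfo_eq_finCondMutualInfo_const]
  refine finCondMutualInfo_eq_zero_of_condIndep hX hY measurable_const fun a b _ => ?_
  simp [h a b]

end Unconditional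

section Comparison

variable {Ω : Type*} [MeasurableSpace Ω] {μ : Measure Ω} [IsProbabilityMeasure μ]
  {A B C D E : Type*} [Fintype A] [Fintype B] [Fintype C] [Fintype D] [Fintype E]
  [MeasurableSpace A] [MeasurableSingletonClass A] [MeasurableSpace B]
  [MeasurableSingletonClass B] [MeasurableSpace C] [MeasurableSingletonClass C]
  [MeasurableSpace D] [MeasurableSingletonClass D] [MeasurableSpace E]
  [MeasurableSingletonClass E] {X : Ω → A} {Y : Ω → B} {Z : Ω → C}

lemma finMutualInfo_comp_le (hX : Measurable X) (hY : Measurable Y) (g : B → D) :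
    finMutualInfo μ X (fun ω => g (Y ω)) ≤ finMutualInfo μ X Y := by
  have hgY : Measurable fun ω => g (Y ω) := Measurable.of_discrete.comp hY
  have hgraph : finMutualInfo μ X (fun ω => (Y ω, g (Y ω))) = finMutualInfo μ X Y := by
    have h₁ : finEntropy μ (fun ω => (Y ω, g (Y ω))) = finEntropy μ Y :=
      finEntropy_comp_of_injective Y (f := fun b => (b, g b)) fun _ _ h => congrArg Prod.fst h
    have h₂ : finEntropy μ (fun ω => (X ω, Y ω, g (Y ω))) = finEntropy μ (fun ω => (X ω, Y ω)) :=
      finEntropy_comp_of_injective (fun ω => (X ω, Y ω)) (f := fun v => (v.1, v.2, g v.2))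
        fun _ _ h => by simp_all [Prod.ext_iff]
    simp only [finMutualInfo, h₁, h₂]
  rw [← hgraph, finMutualInfo_prod_eq_add_finCondMutualInfo]
  linarith [finCondMutualInfo_nonneg (μ := μ) hX hY hgY]

lemma finMutualInfo_comp_le_of_condIndep (hX : Measurable X) (hY : Measurable Y)
    (hZ : Measurable Z) (h : CondIndepFinRV μ X Y Z) (g : B → C → D) :
    finMutualInfo μ X (fun ω => g (Y ω) (Z ω)) ≤ finMutualInfo μ X Z :=
  calc finMutualInfo μ X (fun ω => g (Y ω) (Z ω))
      ≤ finMutualInfo μ X (fun ω => (Y ω, Z ω)) :=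
        finMutualInfo_comp_le hX (hY.prodMk hZ) fun v => g v.1 v.2
    _ = finMutualInfo μ X Z := by
        rw [finMutualInfo_prod_eq_add_finCondMutualInfo,
          finCondMutualInfo_eq_zero_of_condIndep hX hY hZ h, add_zero]

lemma finCondMutualInfo_le_of_condIndep (hX : Measurable X) (hY : Measurable Y)
    (hZ : Measurable Z) (h : CondIndepFinRV μ X Y Z) (u : B → C → D) (w : B → C → E) :
    finCondMutualInfo μ (fun ω => u (Y ω) (Z ω)) X (fun ω => w (Y ω) (Z ω)) ≤
      finMutualInfo μ X Z := by
  have hchain := finMutualInfo_prod_eq_add_finCondMutualInfo (μ := μ) X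
    (fun ω => u (Y ω) (Z ω)) (fun ω => w (Y ω) (Z ω))
  rw [finCondMutualInfo_comm]
  linarith [finMutualInfo_nonneg (μ := μ) hX (measurable_comp₂_of_finite hY hZ w),
    finMutualInfo_comp_le_of_condIndep hX hY hZ h fun y z => (u y z, w y z)]

lemma finMutualInfo_prod_le_of_condIndep (hX : Measurable X) (hY : Measurable Y)
    (hZ : Measurable Z) (h : CondIndepFinRV μ X Y Z) (u : B → C → D) (w : B → C → E)
    (k : E → C) (hk : ∀ ω, k (w (Y ω) (Z ω)) = Z ω) :
    finMutualInfo μ (fun ω => u (Y ω) (Z ω)) (fun ω => (X ω, w (Y ω) (Z ω))) ≤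
      finMutualInfo μ (fun ω => u (Y ω) (Z ω)) (fun ω => w (Y ω) (Z ω)) := by
  set U := fun ω => u (Y ω) (Z ω)
  set W := fun ω => w (Y ω) (Z ω)
  have hW : Measurable W := measurable_comp₂_of_finite hY hZ w
  have hXUW := finMutualInfo_comp_le_of_condIndep hX hY hZ h fun y z => (u y z, w y z)
  have hZW : finMutualInfo μ X Z ≤ finMutualInfo μ X W := by
    have hkW : (fun ω => k (W ω)) = Z := funext hk
    rw [← hkW]
    exact finMutualInfo_comp_le hX hW k
  -- `I(X; (U, W)) ≤ I(X; Z) ≤ I(X; W)` forces `I(X; U | W) ≤ 0`, and `I(U; X | W) = I(X; U | W)`.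
  rw [finMutualInfo_prod_eq_add_finCondMutualInfo] at hXUW ⊢
  rw [finCondMutualInfo_comm]
  linarith

end Comparison

section OneTimePad

variable {Ω : Type*} [MeasurableSpace Ω] {μ : Measure Ω} [IsProbabilityMeasure μ]
  {A B C : Type*} [Fintype A] [MeasurableSpace A] [MeasurableSingletonClass A]

lemma measure_inter_preimage_prod_eq_mul {X : Ω → A} {Y : Ω → B} {Z : Ω → C}
    (hX : Measurable X)
    (h : ∀ a b c, μ (X ⁻¹' {a} ∩ Y ⁻¹' {b} ∩ Z ⁻¹' {c}) =
      μ (X ⁻¹' {a}) * μ (Y ⁻¹' {b}) * μ (Z ⁻¹' {c})) (a : A) (v : B × C) :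
    μ (X ⁻¹' {a} ∩ (fun ω => (Y ω, Z ω)) ⁻¹' {v}) =
      μ (X ⁻¹' {a}) * μ ((fun ω => (Y ω, Z ω)) ⁻¹' {v}) := by
  obtain ⟨b, c⟩ := v
  have hYZ : μ (Y ⁻¹' {b} ∩ Z ⁻¹' {c}) = μ (Y ⁻¹' {b}) * μ (Z ⁻¹' {c}) := by
    rw [measure_eq_sum_inter_preimage hX]
    simp_rw [Set.inter_comm _ (X ⁻¹' _), ← Set.inter_assoc, h, ← Finset.sum_mul,
      sum_measure_preimage_eq_one hX, one_mul]
  simp only [← Set.singleton_prod_singleton, Set.mk_preimage_prod]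
  rw [← Set.inter_assoc, h, hYZ, mul_assoc]

variable {G : Type*} [AddGroup G] [Fintype G] [MeasurableSpace G] [MeasurableSingletonClass G]

lemma finMutualInfo_add_uniform_eq_zero {X : Ω → A} {K : Ω → G} (hX : Measurable X)
    (hK : Measurable K) (hunif : IsUniformRV μ K)
    (hind : ∀ g a, μ (K ⁻¹' {g} ∩ X ⁻¹' {a}) = μ (K ⁻¹' {g}) * μ (X ⁻¹' {a})) (φ : A → G) :
    finMutualInfo μ X (fun ω => φ (X ω) + K ω) = 0 := by
  set C := fun ω => φ (X ω) + K ω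
  have hjoint : ∀ a g,
      μ (X ⁻¹' {a} ∩ C ⁻¹' {g}) = (Fintype.card G : ENNReal)⁻¹ * μ (X ⁻¹' {a}) := by
    intro a g
    have hfiber : X ⁻¹' {a} ∩ C ⁻¹' {g} = K ⁻¹' {-φ a + g} ∩ X ⁻¹' {a} := by
      ext ω
      simp only [Set.mem_inter_iff, Set.mem_preimage, Set.mem_singleton_iff, C,
        eq_neg_add_iff_add_eq]
      constructor
      · rintro ⟨rfl, h⟩
        exact ⟨h, rfl⟩
      · rintro ⟨h, rfl⟩
        exact ⟨rfl, h⟩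
    rw [hfiber, hind, hunif]
  have hC : ∀ g, μ (C ⁻¹' {g}) = (Fintype.card G : ENNReal)⁻¹ := by
    intro g
    rw [measure_eq_sum_inter_preimage hX]
    simp_rw [Set.inter_comm _ (X ⁻¹' _), hjoint, ← Finset.mul_sum,
      sum_measure_preimage_eq_one hX, mul_one]
  refine finMutualInfo_eq_zero_of_indep hX
    (measurable_comp₂_of_finite hX hK fun a k => φ a + k) fun a g => ?_
  rw [hjoint, hC, mul_comm]

end OneTimePad

theorem stmt15_general {Ω G S T₁ T₂ T₃ : Type*} [MeasurableSpace Ω]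
    [AddGroup G] [Fintype G]
    [MeasurableSpace G] [MeasurableSingletonClass G]
    [Fintype S] [MeasurableSpace S] [MeasurableSingletonClass S]
    [Fintype T₁] [MeasurableSpace T₁] [MeasurableSingletonClass T₁]
    [Fintype T₂] [MeasurableSpace T₂] [MeasurableSingletonClass T₂]
    [Fintype T₃] [MeasurableSpace T₃] [MeasurableSingletonClass T₃]
    (μ : Measure Ω) [IsProbabilityMeasure μ]
    (W₁ : Ω → G) (W₂₁ : Ω → S) (W₂₂ : Ω → G)
    (Z₁ : Ω → T₁) (Z₂₁ : Ω → T₂) (Z₂₂ : Ω → T₃)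
    (hW₁ : Measurable W₁) (hW₂₁ : Measurable W₂₁) (hW₂₂ : Measurable W₂₂)
    (hZ₁ : Measurable Z₁) (hZ₂₁ : Measurable Z₂₁) (hZ₂₂ : Measurable Z₂₂)
    (hunif : IsUniformRV μ W₁)
    (hmutind : ∀ (g : G) (s : S) (g' : G),
      μ (W₁ ⁻¹' {g} ∩ W₂₁ ⁻¹' {s} ∩ W₂₂ ⁻¹' {g'}) =
        μ (W₁ ⁻¹' {g}) * μ (W₂₁ ⁻¹' {s}) * μ (W₂₂ ⁻¹' {g'}))
    (hch1 : CondIndepFinRV μ Z₁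
      (fun ω => (W₂₁ ω, W₂₂ ω, Z₂₁ ω, Z₂₂ ω)) W₁)
    (hch2 : CondIndepFinRV μ Z₂₁
      (fun ω => (W₁ ω, W₂₂ ω, Z₁ ω, Z₂₂ ω)) W₂₁)
    (hch3 : CondIndepFinRV μ Z₂₂
      (fun ω => (W₁ ω, W₂₁ ω, W₂₂ ω, Z₁ ω, Z₂₁ ω))
      (fun ω => W₂₂ ω + W₁ ω))
    (ε : ℝ)
    (hleak1 : finMutualInfo μ W₁ Z₁ ≤ ε)
    (hleak2 : finMutualInfo μ W₂₁ Z₂₁ ≤ ε) :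
    finMutualInfo μ (fun ω => (W₂₁ ω, W₂₂ ω))
      (fun ω => (Z₁ ω, Z₂₁ ω, Z₂₂ ω)) ≤ 2 * ε := by
  set M := fun ω => (W₂₁ ω, W₂₂ ω)
  set C := fun ω => W₂₂ ω + W₁ ω
  have hM : Measurable M := hW₂₁.prodMk hW₂₂
  have hC : Measurable C := measurable_comp₂_of_finite hW₂₂ hW₁ (· + ·)
  have hpad : finMutualInfo μ M C = 0 :=
    finMutualInfo_add_uniform_eq_zero hM hW₁ hunif
      (measure_inter_preimage_prod_eq_mul hW₁ hmutind) Prod.snd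
  have hZ₂₂leak : finMutualInfo μ M (fun ω => (Z₂₂ ω, Z₁ ω, Z₂₁ ω, C ω)) ≤
      finMutualInfo μ M (fun ω => (Z₁ ω, Z₂₁ ω, C ω)) :=
    finMutualInfo_prod_le_of_condIndep hZ₂₂ (by fun_prop) hC hch3
      (fun y _ => (y.2.1, y.2.2.1)) (fun y c => (y.2.2.2.1, y.2.2.2.2, c)) (fun r => r.2.2)
      fun _ => rfl
  have hZ₂₁leak : finCondMutualInfo μ M Z₂₁ C ≤ ε :=
    (finCondMutualInfo_le_of_condIndep hZ₂₁ (by fun_prop) hW₂₁ hch2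
      (fun y s => (s, y.2.1)) fun y _ => y.2.1 + y.1).trans
      ((finMutualInfo_comm _ _).trans_le hleak2)
  have hZ₁leak : finCondMutualInfo μ M Z₁ (fun ω => (Z₂₁ ω, C ω)) ≤ ε :=
    (finCondMutualInfo_le_of_condIndep hZ₁ (by fun_prop) hW₁ hch1
      (fun y _ => (y.1, y.2.1)) fun y g => (y.2.2.1, y.2.1 + g)).trans
      ((finMutualInfo_comm _ _).trans_le hleak1)
  calc finMutualInfo μ M (fun ω => (Z₁ ω, Z₂₁ ω, Z₂₂ ω))
      ≤ finMutualInfo μ M (fun ω => (Z₂₂ ω, Z₁ ω, Z₂₁ ω, C ω)) :=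
        finMutualInfo_comp_le (Y := fun ω => (Z₂₂ ω, Z₁ ω, Z₂₁ ω, C ω)) hM (by fun_prop)
          fun r => (r.2.1, r.2.2.1, r.1)
    _ ≤ finMutualInfo μ M (fun ω => (Z₁ ω, Z₂₁ ω, C ω)) := hZ₂₂leak
    _ = finMutualInfo μ M C + finCondMutualInfo μ M Z₂₁ C +
          finCondMutualInfo μ M Z₁ (fun ω => (Z₂₁ ω, C ω)) := by
        rw [finMutualInfo_prod_eq_add_finCondMutualInfo,
          finMutualInfo_prod_eq_add_finCondMutualInfo]
    _ ≤ 2 * ε := by linarith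

/-- Slot-2 leakage bound: with `W₁, W₂₁, W₂₂` mutually independent, `W₁`
uniform on `G`, cipher `C = W₂₂ + W₁`, and eavesdropper outputs `Z₁, Z₂₁, Z₂₂`
depending on the transmissions as stated, wiretap leakage bounds
`I(W₁ ; Z₁) ≤ ε` and `I(W₂₁ ; Z₂₁) ≤ ε` give
`I((W₂₁, W₂₂) ; (Z₁, Z₂₁, Z₂₂)) ≤ 2ε`. -/
theorem stmt15 {Ω G S T₁ T₂ T₃ : Type*} [MeasurableSpace Ω]
    [AddGroup G] [Fintype G] [Nonempty G]
    [MeasurableSpace G] [MeasurableSingletonClass G]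
    [Fintype S] [Nonempty S] [MeasurableSpace S] [MeasurableSingletonClass S]
    [Fintype T₁] [Nonempty T₁] [MeasurableSpace T₁] [MeasurableSingletonClass T₁]
    [Fintype T₂] [Nonempty T₂] [MeasurableSpace T₂] [MeasurableSingletonClass T₂]
    [Fintype T₃] [Nonempty T₃] [MeasurableSpace T₃] [MeasurableSingletonClass T₃]
    (μ : Measure Ω) [IsProbabilityMeasure μ]
    (W₁ : Ω → G) (W₂₁ : Ω → S) (W₂₂ : Ω → G)
    (Z₁ : Ω → T₁) (Z₂₁ : Ω → T₂) (Z₂₂ : Ω → T₃)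
    (hW₁ : Measurable W₁) (hW₂₁ : Measurable W₂₁) (hW₂₂ : Measurable W₂₂)
    (hZ₁ : Measurable Z₁) (hZ₂₁ : Measurable Z₂₁) (hZ₂₂ : Measurable Z₂₂)
    (hunif : IsUniformRV μ W₁)
    (hmutind : ∀ (g : G) (s : S) (g' : G),
      μ (W₁ ⁻¹' {g} ∩ W₂₁ ⁻¹' {s} ∩ W₂₂ ⁻¹' {g'}) =
        μ (W₁ ⁻¹' {g}) * μ (W₂₁ ⁻¹' {s}) * μ (W₂₂ ⁻¹' {g'}))
    (hch1 : CondIndepFinRV μ Z₁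
      (fun ω => (W₂₁ ω, W₂₂ ω, Z₂₁ ω, Z₂₂ ω)) W₁)
    (hch2 : CondIndepFinRV μ Z₂₁
      (fun ω => (W₁ ω, W₂₂ ω, Z₁ ω, Z₂₂ ω)) W₂₁)
    (hch3 : CondIndepFinRV μ Z₂₂
      (fun ω => (W₁ ω, W₂₁ ω, W₂₂ ω, Z₁ ω, Z₂₁ ω))
      (fun ω => W₂₂ ω + W₁ ω))
    (ε : ℝ) (hε : 0 ≤ ε)
    (hleak1 : finMutualInfo μ W₁ Z₁ ≤ ε)
    (hleak2 : finMutualInfo μ W₂₁ Z₂₁ ≤ ε) :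
    finMutualInfo μ (fun ω => (W₂₁ ω, W₂₂ ω))
      (fun ω => (Z₁ ω, Z₂₁ ω, Z₂₂ ω)) ≤ 2 * ε :=
  stmt15_general μ W₁ W₂₁ W₂₂ Z₁ Z₂₁ Z₂₂ hW₁ hW₂₁ hW₂₂ hZ₁ hZ₂₁ hZ₂₂ hunif hmutind hch1 hch2 hch3 ε
    hleak1 hleak2
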